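/- arXiv:1811.02845 — 3 statements merged into one kernel-verified Lean document; each statement's English description precedes it below -/
import Mathlib

section
/- Take the observation operator to be the identity, Q[u] = u restricted to Γ, and let 1 < p < ∞. Suppose u⁰ ∈ 𝒜 satisfies ‖q^δ − u⁰‖_{L^∞(Γ,H^γ)} ≤ δ, and u_p ∈ 𝒜 is a global minimiser over 𝒜 of E_p(v) := ‖v − q^δ‖_{L^p(Γ,H^γ)} + α‖L[v]‖_{L^p(Ω)} (normalized L^p norms). Then the linear rate of convergence ‖u_p − u⁰‖_{L^p(Γ,H^γ)} ≤ 2δ + α‖L[u⁰]‖_{L^p(Ω)} holds. -/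
open MeasureTheory Filter Metric
open scoped ENNReal Topology

noncomputable section

/-- `n`-dimensional Euclidean space. -/
abbrev Euc (n : ℕ) := EuclideanSpace ℝ (Fin n)

/-- The `L^∞` norm (essential supremum of the absolute value) of a real function
with respect to a measure, valued in `ℝ≥0∞`. -/
def eNormInf {α : Type*} [MeasurableSpace α] (μ : Measure α) (f : α → ℝ) : ℝ≥0∞ :=
  essSup (fun x => ENNReal.ofReal |f x|) μ

/-- The normalised `L^p` norm `((1/μ(univ)) ∫ |f|^p dμ)^(1/p)` of a real function
with respect to a measure, valued in `ℝ≥0∞`. -/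
def eNormP {α : Type*} [MeasurableSpace α] (p : ℝ) (μ : Measure α) (f : α → ℝ) : ℝ≥0∞ :=
  ((μ Set.univ)⁻¹ * ∫⁻ x, (ENNReal.ofReal |f x|) ^ p ∂μ) ^ (1 / p)

/-- The second-order non-divergence operator `L[u] = A : D²u + b · Du + c u`. -/
def Lop {n : ℕ} (A : Euc n → Matrix (Fin n) (Fin n) ℝ) (b : Euc n → Euc n)
    (c : Euc n → ℝ) (u : Euc n → ℝ) (x : Euc n) : ℝ :=
  (∑ i : Fin n, ∑ j : Fin n, A x i j *
      fderiv ℝ (fun y => fderiv ℝ u y (EuclideanSpace.single j (1:ℝ))) x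
        (EuclideanSpace.single i (1:ℝ)))
    + (∑ i : Fin n, b x i * fderiv ℝ u x (EuclideanSpace.single i (1:ℝ)))
    + c x * u x

/-!
The data misfit of `u⁰` is at most `δ` and `E_p(u_p) ≤ E_p(u⁰)`, so
`‖u_p − q^δ‖ ≤ δ + α ‖L[u⁰]‖`; the triangle inequality through `q^δ` adds one more `δ`.
Since `q^δ` need not be measurable, Minkowski's inequality is applied to `(|u_p − u⁰| − δ)⁺ + δ`
instead of `|u_p − q^δ| + |q^δ − u⁰|`.
-/

open Set

namespace NormalizedLp

variable {α : Type*} [MeasurableSpace α] {μ : Measure α} {p : ℝ}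

def normalizedLpNorm (p : ℝ) (μ : Measure α) (F : α → ℝ≥0∞) : ℝ≥0∞ :=
  ((μ univ)⁻¹ * ∫⁻ x, F x ^ p ∂μ) ^ (1 / p)

theorem eNormP_eq_normalizedLpNorm (f : α → ℝ) :
    eNormP p μ f = normalizedLpNorm p μ (fun x => ENNReal.ofReal |f x|) := rfl

theorem normalizedLpNorm_mono_ae (hp : 0 ≤ p) {F G : α → ℝ≥0∞} (h : ∀ᵐ x ∂μ, F x ≤ G x) :
    normalizedLpNorm p μ F ≤ normalizedLpNorm p μ G := by
  refine ENNReal.rpow_le_rpow (mul_le_mul_right ?_ _) (by positivity)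
  exact lintegral_mono_ae (h.mono fun x hx => ENNReal.rpow_le_rpow hx hp)

theorem normalizedLpNorm_const (hp : p ≠ 0) (h0 : μ univ ≠ 0) (htop : μ univ ≠ ⊤) (c : ℝ≥0∞) :
    normalizedLpNorm p μ (fun _ => c) = c := by
  rw [normalizedLpNorm, lintegral_const, mul_comm, mul_assoc, ENNReal.mul_inv_cancel h0 htop,
    mul_one, ← ENNReal.rpow_mul, mul_one_div_cancel hp, ENNReal.rpow_one]

theorem normalizedLpNorm_add_le (hp : 1 ≤ p) {F G : α → ℝ≥0∞} (hF : AEMeasurable F μ)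
    (hG : AEMeasurable G μ) :
    normalizedLpNorm p μ (F + G) ≤ normalizedLpNorm p μ F + normalizedLpNorm p μ G := by
  have hp' : 0 ≤ 1 / p := by positivity
  simp only [normalizedLpNorm, ENNReal.mul_rpow_of_nonneg _ _ hp', ← mul_add]
  exact mul_le_mul_right (ENNReal.lintegral_Lp_add_le hF hG hp) _

theorem normalizedLpNorm_le_add_of_ae_le_add (hp : 1 ≤ p) (h0 : μ univ ≠ 0)
    (htop : μ univ ≠ ⊤) {F G : α → ℝ≥0∞} {c : ℝ≥0∞} (hF : AEMeasurable F μ)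
    (h : ∀ᵐ x ∂μ, F x ≤ G x + c) :
    normalizedLpNorm p μ F ≤ normalizedLpNorm p μ G + c := by
  have hp0 : 0 ≤ p := zero_le_one.trans hp
  calc normalizedLpNorm p μ F
      ≤ normalizedLpNorm p μ ((fun x => F x - c) + fun _ => c) :=
        normalizedLpNorm_mono_ae hp0 (ae_of_all _ fun _ => le_tsub_add)
    _ ≤ normalizedLpNorm p μ (fun x => F x - c) + normalizedLpNorm p μ (fun _ => c) :=
        normalizedLpNorm_add_le hp (hF.sub aemeasurable_const) aemeasurable_const
    _ ≤ normalizedLpNorm p μ G + c := by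
        rw [normalizedLpNorm_const (by positivity) h0 htop]
        gcongr
        exact normalizedLpNorm_mono_ae hp0 (h.mono fun x hx => tsub_le_iff_right.mpr hx)

theorem eNormP_le_add_of_ae_abs_le_add (hp : 1 ≤ p) (h0 : μ univ ≠ 0) (htop : μ univ ≠ ⊤)
    {f g : α → ℝ} {r : ℝ} (hr : 0 ≤ r) (hf : AEMeasurable f μ)
    (h : ∀ᵐ x ∂μ, |f x| ≤ |g x| + r) :
    eNormP p μ f ≤ eNormP p μ g + ENNReal.ofReal r := by
  refine normalizedLpNorm_le_add_of_ae_le_add hp h0 htop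
    (ENNReal.measurable_ofReal.comp_aemeasurable hf.abs) (h.mono fun x hx => ?_)
  rw [← ENNReal.ofReal_add (abs_nonneg _) hr]
  exact ENNReal.ofReal_le_ofReal hx

theorem eNormP_le_of_ae_abs_le (hp : 0 < p) (h0 : μ univ ≠ 0) (htop : μ univ ≠ ⊤)
    {f : α → ℝ} {r : ℝ} (h : ∀ᵐ x ∂μ, |f x| ≤ r) :
    eNormP p μ f ≤ ENNReal.ofReal r := by
  rw [eNormP_eq_normalizedLpNorm, ← normalizedLpNorm_const hp.ne' h0 htop (ENNReal.ofReal r)]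
  exact normalizedLpNorm_mono_ae hp.le (h.mono fun x hx => ENNReal.ofReal_le_ofReal hx)

end NormalizedLp

theorem ae_abs_le_of_eNormInf_le {α : Type*} [MeasurableSpace α] {μ : Measure α} {f : α → ℝ}
    {r : ℝ} (hr : 0 ≤ r) (h : eNormInf μ f ≤ ENNReal.ofReal r) : ∀ᵐ x ∂μ, |f x| ≤ r :=
  Eventually.mono ae_le_essSup fun _ hx => (ENNReal.ofReal_le_ofReal_iff hr).mp (hx.trans h)

open NormalizedLp

theorem lp_linear_rate_identity_observation_general
    {n : ℕ}
    -- the domain Ω : a bounded open subset of ℝⁿ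
    (Ω : Set (Euc n))
    -- the dimension γ ∈ [0,n] and the compact measurement set Γ ⊆ Ω̄
    (γ : ℝ)
    (Γ : Set (Euc n)) (hΓc : IsCompact Γ) (hΓΩ : Γ ⊆ closure Ω)
    (hΓ0 : 0 < μH[γ] Γ) (hΓfin : μH[γ] Γ < ⊤)
    -- the coefficients of L : bounded, continuous, A symmetric-matrix valued
    (A : Euc n → Matrix (Fin n) (Fin n) ℝ)
    (b : Euc n → Euc n)
    (c : Euc n → ℝ)
    -- the admissible class 𝒜 : C¹ on Ω̄ and twice differentiable in Ω
    (𝒜 : Set (Euc n → ℝ))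
    (h𝒜 : ∀ u ∈ 𝒜, ContDiffOn ℝ 1 u (closure Ω) ∧ DifferentiableOn ℝ u Ω ∧
      DifferentiableOn ℝ (fderiv ℝ u) Ω)
    -- the exponent 1 < p < ∞
    (p : ℝ) (hp : 1 < p)
    -- regularisation parameter, noise level, noisy measurements q^δ ∈ L^∞(Γ,H^γ)
    (α δ : ℝ) (hδ : 0 < δ)
    (qδ : Euc n → ℝ)
    -- exact solution u⁰ matching the noisy data up to level δ
    (u0 : Euc n → ℝ) (hu0 : u0 ∈ 𝒜)
    (hnoise : eNormInf (μH[γ].restrict Γ) (fun x => qδ x - u0 x) ≤ ENNReal.ofReal δ)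
    -- u_p : a global minimiser of E_p over 𝒜 (identity observation operator)
    (up : Euc n → ℝ) (hup : up ∈ 𝒜)
    (hmin : ∀ v ∈ 𝒜,
      eNormP p (μH[γ].restrict Γ) (fun x => up x - qδ x)
          + ENNReal.ofReal α * eNormP p (volume.restrict Ω) (Lop A b c up)
        ≤ eNormP p (μH[γ].restrict Γ) (fun x => v x - qδ x)
          + ENNReal.ofReal α * eNormP p (volume.restrict Ω) (Lop A b c v)) :
    eNormP p (μH[γ].restrict Γ) (fun x => up x - u0 x)
      ≤ ENNReal.ofReal (2 * δ)
        + ENNReal.ofReal α * eNormP p (volume.restrict Ω) (Lop A b c u0) := by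
  set ν := μH[γ].restrict Γ
  set R := ENNReal.ofReal α * eNormP p (volume.restrict Ω) (Lop A b c u0)
  have h0 : ν univ ≠ 0 := by simpa [ν] using hΓ0.ne'
  have htop : ν univ ≠ ⊤ := by simpa [ν] using hΓfin.ne
  have hcont : ∀ u ∈ 𝒜, ContinuousOn u Γ := fun u hu =>
    (h𝒜 u hu).1.continuousOn.mono hΓΩ
  have hdiff_meas : AEMeasurable (fun x => up x - u0 x) ν :=
    ((hcont up hup).aemeasurable hΓc.measurableSet).sub
      ((hcont u0 hu0).aemeasurable hΓc.measurableSet)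
  have hnoise_ae := ae_abs_le_of_eNormInf_le hδ.le hnoise
  have htriangle : ∀ᵐ x ∂ν, |up x - u0 x| ≤ |up x - qδ x| + δ := hnoise_ae.mono fun x hx => by
    linarith [abs_sub_le (up x) (qδ x) (u0 x)]
  have hdata : eNormP p ν (fun x => u0 x - qδ x) ≤ ENNReal.ofReal δ :=
    eNormP_le_of_ae_abs_le (by positivity) h0 htop
      (hnoise_ae.mono fun x hx => by rwa [abs_sub_comm])
  have hmisfit : eNormP p ν (fun x => up x - qδ x) ≤ ENNReal.ofReal δ + R :=
    (le_self_add.trans (hmin u0 hu0)).trans (by gcongr)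
  calc eNormP p ν (fun x => up x - u0 x)
      ≤ eNormP p ν (fun x => up x - qδ x) + ENNReal.ofReal δ :=
        eNormP_le_add_of_ae_abs_le_add hp.le h0 htop hδ.le hdiff_meas htriangle
    _ ≤ ENNReal.ofReal δ + R + ENNReal.ofReal δ := by gcongr
    _ = ENNReal.ofReal (2 * δ) + R := by
        rw [two_mul, ENNReal.ofReal_add hδ.le hδ.le]; ring

/-- **Linear rate of convergence, $L^p$ case, identity observation operator.**
If `1 < p < ∞`, `u⁰ ∈ 𝒜` satisfies `‖q^δ − u⁰‖_{L^∞(Γ,H^γ)} ≤ δ` and `u_p ∈ 𝒜` is a global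
minimiser over `𝒜` of `E_p(v) = ‖v − q^δ‖_{L^p(Γ,H^γ)} + α ‖L[v]‖_{L^p(Ω)}` (normalised `L^p`
norms), then `‖u_p − u⁰‖_{L^p(Γ,H^γ)} ≤ 2δ + α ‖L[u⁰]‖_{L^p(Ω)}`. -/
theorem lp_linear_rate_identity_observation
    {n : ℕ}
    -- the domain Ω : a bounded open subset of ℝⁿ
    (Ω : Set (Euc n)) (hΩo : IsOpen Ω) (hΩb : Bornology.IsBounded Ω)
    -- the dimension γ ∈ [0,n] and the compact measurement set Γ ⊆ Ω̄
    (γ : ℝ) (hγ0 : 0 ≤ γ) (hγn : γ ≤ (n : ℝ))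
    (Γ : Set (Euc n)) (hΓc : IsCompact Γ) (hΓΩ : Γ ⊆ closure Ω)
    (hΓ0 : 0 < μH[γ] Γ) (hΓfin : μH[γ] Γ < ⊤)
    -- the coefficients of L : bounded, continuous, A symmetric-matrix valued
    (A : Euc n → Matrix (Fin n) (Fin n) ℝ)
    (hAsymm : ∀ x ∈ Ω, (A x).IsSymm)
    (hAcont : ∀ i j, ContinuousOn (fun x => A x i j) Ω)
    (hAbd : ∃ C : ℝ, ∀ x ∈ Ω, ∀ i j, |A x i j| ≤ C)
    (b : Euc n → Euc n) (hbcont : ContinuousOn b Ω) (hbbd : ∃ C : ℝ, ∀ x ∈ Ω, ‖b x‖ ≤ C)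
    (c : Euc n → ℝ) (hccont : ContinuousOn c Ω) (hcbd : ∃ C : ℝ, ∀ x ∈ Ω, |c x| ≤ C)
    -- the admissible class 𝒜 : C¹ on Ω̄ and twice differentiable in Ω
    (𝒜 : Set (Euc n → ℝ))
    (h𝒜 : ∀ u ∈ 𝒜, ContDiffOn ℝ 1 u (closure Ω) ∧ DifferentiableOn ℝ u Ω ∧
      DifferentiableOn ℝ (fderiv ℝ u) Ω)
    -- the exponent 1 < p < ∞
    (p : ℝ) (hp : 1 < p)
    -- regularisation parameter, noise level, noisy measurements q^δ ∈ L^∞(Γ,H^γ)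
    (α δ : ℝ) (hα : 0 < α) (hδ : 0 < δ)
    (qδ : Euc n → ℝ) (hqδ : eNormInf (μH[γ].restrict Γ) qδ < ⊤)
    -- exact solution u⁰ matching the noisy data up to level δ
    (u0 : Euc n → ℝ) (hu0 : u0 ∈ 𝒜)
    (hnoise : eNormInf (μH[γ].restrict Γ) (fun x => qδ x - u0 x) ≤ ENNReal.ofReal δ)
    -- u_p : a global minimiser of E_p over 𝒜 (identity observation operator)
    (up : Euc n → ℝ) (hup : up ∈ 𝒜)
    (hmin : ∀ v ∈ 𝒜,
      eNormP p (μH[γ].restrict Γ) (fun x => up x - qδ x)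
          + ENNReal.ofReal α * eNormP p (volume.restrict Ω) (Lop A b c up)
        ≤ eNormP p (μH[γ].restrict Γ) (fun x => v x - qδ x)
          + ENNReal.ofReal α * eNormP p (volume.restrict Ω) (Lop A b c v)) :
    eNormP p (μH[γ].restrict Γ) (fun x => up x - u0 x)
      ≤ ENNReal.ofReal (2 * δ)
        + ENNReal.ofReal α * eNormP p (volume.restrict Ω) (Lop A b c u0) :=
  lp_linear_rate_identity_observation_general Ω γ Γ hΓc hΓΩ hΓ0 hΓfin A b c 𝒜 h𝒜 p hp α δ hδ qδ u0
    hu0 hnoise up hup hmin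

end
end

section
/- Assume additionally ν(X) > 0. For every f ∈ L^∞(X,ν), the ν-essential limsup gives a pointwise meaning to the essential supremum: sup_{x ∈ X} f^★(x) = ν-ess sup_{x ∈ X} f(x). -/
/-! For `c < ess sup f` the set `{c < f}` is not null, so, the space being second countable,
some point `x` of it, taken in the conull set `X`, sees `{c < f}` with positive measure in every
ball around it; hence `f^★(x) ≥ c`. Conversely, `f^★(x)` is at most the essential supremum of `f`
on a ball of positive measure around `x`, which is at most `ess sup f`. -/

open MeasureTheory Filter Metric
open scoped ENNReal Topology

noncomputable section

/-- The `ν`-essential limsup of `f` on `X` at `x`: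
`f^★(x) = lim_{ε→0} (ν-ess sup_{y ∈ B_ε(x)} f(y)) = inf_{ε>0} (ν-ess sup_{y ∈ B_ε(x)} f(y))`,
where `B_ε(x) = X ∩ {y : |y − x| < ε}` is the open `ε`-ball of `X` centred at `x`. -/
def essLimSup {n : ℕ} (ν : Measure (Euc n)) (X : Set (Euc n)) (f : Euc n → ℝ)
    (x : Euc n) : ℝ :=
  ⨅ ε : Set.Ioi (0 : ℝ), essSup f (ν.restrict (X ∩ Metric.ball x (ε : ℝ)))

open Set

section EssSup

variable {α : Type*} [MeasurableSpace α] {μ : Measure α} {f : α → ℝ} {c C : ℝ}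

-- A junk value: `sInf univ = 0` in `ℝ`.
theorem essSup_zero_measure_eq_zero : essSup f (0 : Measure α) = 0 := by
  simp [essSup_eq_sInf]

theorem isBoundedUnder_le_of_ae_abs_le (hC : ∀ᵐ x ∂μ, |f x| ≤ C) :
    IsBoundedUnder (· ≤ ·) (ae μ) f :=
  isBoundedUnder_of_eventually_le (hC.mono fun _ hx => (abs_le.1 hx).2)

theorem isCoboundedUnder_le_of_ae_abs_le [NeZero μ] (hC : ∀ᵐ x ∂μ, |f x| ≤ C) :
    IsCoboundedUnder (· ≤ ·) (ae μ) f :=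
  isCoboundedUnder_le_of_eventually_le _ (hC.mono fun _ hx => (abs_le.1 hx).1)

theorem abs_essSup_le (hC0 : 0 ≤ C) (hC : ∀ᵐ x ∂μ, |f x| ≤ C) : |essSup f μ| ≤ C := by
  rcases eq_zero_or_neZero μ with rfl | _
  · simpa [essSup_zero_measure_eq_zero] using hC0
  refine abs_le.2 ⟨le_of_not_gt fun hlt => ?_,
    essSup_le_of_ae_le C (hC.mono fun _ hx => (abs_le.1 hx).2)
      (isCoboundedUnder_le_of_ae_abs_le hC)⟩
  obtain ⟨x, hxlt, hxC⟩ :=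
    ((ae_lt_of_essSup_lt hlt (isBoundedUnder_le_of_ae_abs_le hC)).and hC).exists
  linarith [(abs_le.1 hxC).1]

theorem le_essSup_of_measure_ne_zero (hf : IsBoundedUnder (· ≤ ·) (ae μ) f)
    (h : μ {x | c < f x} ≠ 0) : c ≤ essSup f μ :=
  le_of_not_gt fun hlt => h <| by
    simpa only [ae_iff, not_le] using (ae_lt_of_essSup_lt hlt hf).mono fun _ => le_of_lt

theorem measure_lt_ne_zero_of_lt_essSup (hf : IsCoboundedUnder (· ≤ ·) (ae μ) f)
    (hc : c < essSup f μ) : μ {x | c < f x} ≠ 0 := fun h =>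
  hc.not_ge <| essSup_le_of_ae_le c (ae_iff.2 (by simpa only [not_le] using h)) hf

end EssSup

section Balls

variable {α : Type*} [PseudoMetricSpace α] [MeasurableSpace α] {μ : Measure α}

theorem exists_measure_ball_ne_zero [NeZero μ] (x : α) : ∃ ε > 0, μ (ball x ε) ≠ 0 := by
  by_contra! h
  apply NeZero.ne μ
  rw [← Measure.measure_univ_eq_zero, ← iUnion_ball_nat_succ x]
  exact measure_iUnion_null fun k => h _ k.cast_add_one_pos

theorem exists_mem_forall_measure_inter_ball_ne_zero [SecondCountableTopology α] {s : Set α}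
    (hs : μ s ≠ 0) : ∃ x ∈ s, ∀ ε > 0, μ (s ∩ ball x ε) ≠ 0 := by
  obtain ⟨x, hx, hpos⟩ := exists_mem_forall_mem_nhdsWithin_pos_measure hs
  exact ⟨x, hx, fun ε hε => (hpos _ (inter_mem_nhdsWithin s (ball_mem_nhds x hε))).ne'⟩

end Balls

section EssLimSup

variable {n : ℕ} {ν : Measure (Euc n)} {X : Set (Euc n)} {f : Euc n → ℝ} {c C : ℝ}

theorem essLimSup_le_essSup [NeZero ν] (hνX : ν Xᶜ = 0) (hC0 : 0 ≤ C)
    (hC : ∀ᵐ y ∂ν, |f y| ≤ C) (x : Euc n) : essLimSup ν X f x ≤ essSup f ν := by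
  obtain ⟨ε, hε, hball⟩ := exists_measure_ball_ne_zero (μ := ν) x
  have : NeZero (ν.restrict (X ∩ ball x ε)) :=
    ⟨by rwa [Ne, Measure.restrict_eq_zero, inter_comm, measure_inter_conull hνX]⟩
  have hbdd : BddBelow (range fun ε : Ioi (0 : ℝ) => essSup f (ν.restrict (X ∩ ball x ε))) :=
    ⟨-C, forall_mem_range.2 fun _ => (abs_le.1 (abs_essSup_le hC0 (ae_restrict_of_ae hC))).1⟩
  exact ciInf_le_of_le hbdd ⟨ε, hε⟩ <|
    essSup_mono_measure Measure.restrict_le_self.absolutelyContinuous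
      (isCoboundedUnder_le_of_ae_abs_le (ae_restrict_of_ae hC))
      (isBoundedUnder_le_of_ae_abs_le hC)

theorem le_essLimSup {x : Euc n} (hC : ∀ᵐ y ∂ν, |f y| ≤ C)
    (hpos : ∀ ε > 0, ν ({y | c < f y} ∩ X ∩ ball x ε) ≠ 0) : c ≤ essLimSup ν X f x :=
  le_ciInf fun ε =>
    le_essSup_of_measure_ne_zero (isBoundedUnder_le_of_ae_abs_le (ae_restrict_of_ae hC))
      fun h => hpos ε ε.2 <| nonpos_iff_eq_zero.1 <| by
        rw [inter_assoc, ← h]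
        exact Measure.le_restrict_apply _ _

end EssLimSup

theorem iSup_essLimSup_eq_essSup_general
    {n : ℕ} (X : Set (Euc n))
    (ν : Measure (Euc n)) (hνX : ν Xᶜ = 0) (hν0 : 0 < ν X)
    (f : Euc n → ℝ) (hf : MemLp f ⊤ (ν.restrict X)) :
    (⨆ x : X, essLimSup ν X f (x : Euc n)) = essSup f (ν.restrict X) := by
  rw [Measure.restrict_eq_self_of_ae_mem (ae_iff.2 hνX)] at hf ⊢
  have : NeZero ν := ⟨fun h => by simp [h] at hν0⟩
  have : Nonempty X := (nonempty_of_measure_ne_zero hν0.ne').to_subtype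
  obtain ⟨C, hC⟩ := eLpNormEssSup_lt_top_iff_isBoundedUnder.1
    (eLpNorm_exponent_top (f := f) ▸ hf.eLpNorm_lt_top)
  replace hC : ∀ᵐ y ∂ν, |f y| ≤ C := by
    simpa only [eventually_map, ← NNReal.coe_le_coe, coe_nnnorm, Real.norm_eq_abs] using hC
  have hle := essLimSup_le_essSup hνX C.2 hC
  refine le_antisymm (ciSup_le fun x => hle x) (le_of_forall_lt_imp_le_of_dense fun c hc => ?_)
  have hS : ν ({y | c < f y} ∩ X) ≠ 0 := by
    rw [measure_inter_conull hνX]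
    exact measure_lt_ne_zero_of_lt_essSup (isCoboundedUnder_le_of_ae_abs_le hC) hc
  obtain ⟨x, ⟨-, hxX⟩, hpos⟩ := exists_mem_forall_measure_inter_ball_ne_zero hS
  have hbdd : BddAbove (range fun x : X => essLimSup ν X f x) :=
    ⟨_, forall_mem_range.2 fun x => hle x⟩
  exact (le_essLimSup hC hpos).trans (le_ciSup hbdd ⟨x, hxX⟩)

/-- **The essential limsup gives a pointwise meaning to the essential supremum.**
Let `X ⊆ ℝⁿ` be a Borel set and `ν` a finite positive Radon measure on `X` with `ν(X) > 0`.
For every `f ∈ L^∞(X,ν)`, `sup_{x ∈ X} f^★(x) = ν-ess sup_{x ∈ X} f(x)`. -/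
theorem iSup_essLimSup_eq_essSup
    {n : ℕ} (X : Set (Euc n)) (hX : MeasurableSet X)
    (ν : Measure (Euc n)) [IsFiniteMeasure ν] (hνX : ν Xᶜ = 0) (hν0 : 0 < ν X)
    (f : Euc n → ℝ) (hf : MemLp f ⊤ (ν.restrict X)) :
    (⨆ x : X, essLimSup ν X f (x : Euc n)) = essSup f (ν.restrict X) :=
  iSup_essLimSup_eq_essSup_general X ν hνX hν0 f hf

end
end

section
/- Suppose in addition that ν(U) > 0 for every nonempty relatively open subset U ⊆ X, that there exists f_∞ ∈ L^∞(X,ν) with ‖f_∞‖_{L^∞(X,ν)} > 0 such that sup_X |f_k − f_∞| → 0 as k → ∞, and that ν_{k_i} converges weakly* to a finite signed Borel measure ν_∞ along a subsequence k_i → ∞ (i.e. ∫_X φ dν_{k_i} → ∫_X φ dν_∞ for all continuous φ : X → ℝ). Then the support of ν_∞ (the support of its total variation measure) is contained in the set { x ∈ X : |f_∞|^★(x) = ‖f_∞‖_{L^∞(X,ν)} }, where |f_∞|^★ is the ν-essential limsup of |f_∞|. -/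
open MeasureTheory Filter Metric
open scoped ENNReal Topology

noncomputable section

/-- The `k`-regularisation `|a|_{(k)} = √(a² + k⁻²)` of the absolute value. -/
def regAbs (k : ℕ) (a : ℝ) : ℝ := Real.sqrt (a ^ 2 + ((k : ℝ)⁻¹) ^ 2)

/-- The normalised `L^k` norm `‖g‖_{L^k(X,ν)} = ((1/ν(X)) ∫_X |g|^k dν)^(1/k)`. -/
def nLkNorm {n : ℕ} (k : ℕ) (ν : Measure (Euc n)) (X : Set (Euc n)) (g : Euc n → ℝ) : ℝ :=
  ((ν X).toReal⁻¹ * ∫ x in X, |g x| ^ (k : ℝ) ∂ν) ^ ((k : ℝ)⁻¹)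

/-- The `L^∞(X,ν)` norm: the `ν`-essential supremum of `|g|` on `X`. -/
def nLinfNorm {n : ℕ} (ν : Measure (Euc n)) (X : Set (Euc n)) (g : Euc n → ℝ) : ℝ :=
  essSup (fun x => |g x|) (ν.restrict X)

/-- The density `(1/ν(X)) (|f|_{(k)})^{k−2} f / ‖|f|_{(k)}‖^{k−1}_{L^k(X,ν)}`
of the `k`-th concentration measure with respect to `ν`. -/
def concDensity {n : ℕ} (k : ℕ) (ν : Measure (Euc n)) (X : Set (Euc n))
    (f : Euc n → ℝ) : Euc n → ℝ :=
  fun x => (ν X).toReal⁻¹ *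
    (regAbs k (f x) ^ ((k : ℝ) - 2) * f x /
      nLkNorm k ν X (fun y => regAbs k (f y)) ^ ((k : ℝ) - 1))

/-- The integral of a real function against a signed measure, via the Jordan decomposition. -/
def sInt {n : ℕ} (μ : SignedMeasure (Euc n)) (g : Euc n → ℝ) : ℝ :=
  ∫ x, g x ∂μ.toJordanDecomposition.posPart - ∫ x, g x ∂μ.toJordanDecomposition.negPart

/-- The support of a (nonnegative) measure: points all of whose neighbourhoods have
positive measure. -/
def msupport {n : ℕ} (μ : Measure (Euc n)) : Set (Euc n) := {x | ∀ U ∈ 𝓝 x, 0 < μ U}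

lemma regAbs_nonneg (k : ℕ) (a : ℝ) : 0 ≤ regAbs k a := Real.sqrt_nonneg _
lemma abs_le_regAbs (k : ℕ) (a : ℝ) : |a| ≤ regAbs k a := by
  rw [regAbs, ← Real.sqrt_sq_eq_abs]
  exact Real.sqrt_le_sqrt (le_add_of_nonneg_right (by positivity))
lemma regAbs_le_abs_add (k : ℕ) (a : ℝ) : regAbs k a ≤ |a| + (k : ℝ)⁻¹ := by
  have h1 : (0:ℝ) ≤ (k : ℝ)⁻¹ := by positivity
  have h2 : (0:ℝ) ≤ |a| := abs_nonneg a
  calc regAbs k a ≤ Real.sqrt ((|a| + (k:ℝ)⁻¹) ^ 2) := by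
        refine Real.sqrt_le_sqrt ?_
        have : a ^ 2 = |a| ^ 2 := (sq_abs a).symm
        nlinarith
    _ = |a| + (k:ℝ)⁻¹ := Real.sqrt_sq (by positivity)
lemma regAbs_le (k : ℕ) (a : ℝ) : regAbs k a ≤ |a| + 1 := by
  rcases Nat.eq_zero_or_pos k with h | h
  · simpa [h] using (regAbs_le_abs_add 0 a).trans (by norm_num [abs_nonneg a])
  · refine (regAbs_le_abs_add k a).trans ?_
    have : (k:ℝ)⁻¹ ≤ 1 := by
      rw [inv_le_one_iff₀]; right; exact_mod_cast Nat.one_le_iff_ne_zero.mpr h.ne'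
    linarith
lemma regAbs_pos {k : ℕ} (hk : 1 ≤ k) (a : ℝ) : 0 < regAbs k a := by
  apply Real.sqrt_pos.mpr
  have : (0:ℝ) < (k:ℝ)⁻¹ := by positivity
  positivity
lemma essSup_abs_nonneg {α : Type*} [MeasurableSpace α] (μ : Measure α) (h : α → ℝ) :
    0 ≤ essSup (fun y => |h y|) μ := by
  rw [essSup_eq_sInf]
  rcases eq_or_ne μ 0 with hμ | hμ
  · have : {a : ℝ | μ {x | a < |h x|} = 0} = Set.univ := by
      ext a; simp [hμ]
    rw [this, Real.sInf_of_not_bddBelow]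
    rintro ⟨b, hb⟩
    have := hb (Set.mem_univ (b - 1))
    linarith
  · apply Real.sInf_nonneg
    intro a ha
    by_contra hlt
    push_neg at hlt
    have : {x | a < |h x|} = Set.univ := by
      ext x; simp only [Set.mem_setOf_eq, Set.mem_univ, iff_true]
      exact lt_of_lt_of_le hlt (abs_nonneg _)
    simp only [Set.mem_setOf_eq, this] at ha
    exact hμ (Measure.measure_univ_eq_zero.mp ha)
lemma sInt_withDensityᵥ {n : ℕ} (ν : Measure (Euc n)) [IsFiniteMeasure ν] {d : Euc n → ℝ}
    (hd : Measurable d) (hdi : Integrable d ν) {g : Euc n → ℝ} (hg : Continuous g)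
    (C : ℝ) (hgb : ∀ x, |g x| ≤ C) :
    sInt (ν.withDensityᵥ d) g = ∫ x, g x * d x ∂ν := by
  have hJ := SignedMeasure.toJordanDecomposition_eq_of_eq_add_withDensity
    (μ := ν) (s := ν.withDensityᵥ d) (t := 0) hd hdi
    (VectorMeasure.MutuallySingular.zero_left) (by rw [zero_add])
  rw [sInt, hJ]
  simp only [SignedMeasure.toJordanDecomposition_zero, JordanDecomposition.zero_posPart,
    JordanDecomposition.zero_negPart, zero_add]
  have key : ∀ e : Euc n → ℝ, Measurable e →
      (∫ x, g x ∂(ν.withDensity fun x => ENNReal.ofReal (e x)))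
        = ∫ x, g x * max (e x) 0 ∂ν := by
    intro e he
    have h1 : (∫ x, g x ∂(ν.withDensity fun x => ((Real.toNNReal (e x) : NNReal) : ℝ≥0∞)))
        = ∫ x, (Real.toNNReal (e x)) • g x ∂ν :=
      integral_withDensity_eq_integral_smul he.real_toNNReal g
    have h0 : (fun x => ENNReal.ofReal (e x)) = fun x => ((Real.toNNReal (e x) : NNReal) : ℝ≥0∞) := rfl
    rw [h0, h1]
    congr 1
    funext x
    rw [NNReal.smul_def, Real.coe_toNNReal' (e x), smul_eq_mul, mul_comm]
  rw [key d hd, key (fun x => -d x) hd.neg]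
  have i1 : Integrable (fun x => g x * max (d x) 0) ν :=
    Integrable.bdd_mul (hdi.pos_part) hg.aestronglyMeasurable (c := C) (Filter.Eventually.of_forall fun x => by
      simpa [Real.norm_eq_abs] using hgb x)
  have i2 : Integrable (fun x => g x * max (-d x) 0) ν :=
    Integrable.bdd_mul (hdi.neg.pos_part) hg.aestronglyMeasurable (c := C) (Filter.Eventually.of_forall fun x => by
      simpa [Real.norm_eq_abs] using hgb x)
  rw [← integral_sub i1 i2]
  congr 1
  funext x
  rw [← mul_sub, max_zero_sub_max_neg_zero_eq_self]
lemma helper_vanish {n : ℕ} (a b : Measure (Euc n)) [IsFiniteMeasure a] [IsFiniteMeasure b]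
    (x : Euc n) {r : ℝ} (hr : 0 < r) {t : Set (Euc n)} (ht : MeasurableSet t)
    (hat : a t = 0) (hbt : b tᶜ = 0)
    (hint : ∀ g : Euc n → ℝ, Continuous g → tsupport g ⊆ ball x r →
      (∀ y, g y ∈ Set.Icc (0:ℝ) 1) → ∫ y, g y ∂a = ∫ y, g y ∂b) :
    a (ball x (r/2)) = 0 := by
  set B := ball x (r/2)
  have hBd : a B = a (B \ t) := (measure_diff_null hat).symm
  rw [hBd]
  have hmeas : MeasurableSet (B \ t) := measurableSet_ball.diff ht
  refine le_antisymm (ENNReal.le_of_forall_pos_le_add fun ε hε _ => ?_) zero_le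
  have hε2 : ((ε : ℝ≥0∞) / 2) ≠ 0 := by
    simp [ENNReal.div_eq_zero_iff, (by exact_mod_cast hε.ne' : (ε:ℝ≥0∞) ≠ 0)]
  obtain ⟨K, hKsub, hKc, hKlt⟩ := hmeas.exists_isCompact_lt_add (measure_ne_top a _) hε2
  -- q K = 0
  have hbK : b K = 0 := le_antisymm (le_trans (measure_mono (fun y hy =>
    (hKsub hy).2)) (le_of_eq hbt)) zero_le
  obtain ⟨U, hUK, hUo, hUlt⟩ := Set.exists_isOpen_lt_of_lt K ((ε : ℝ≥0∞)/2)
    (by rw [hbK]; exact (pos_iff_ne_zero.mpr hε2))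
  set V := U ∩ ball x (3 * r / 4)
  have hKV : K ⊆ V := fun y hy => ⟨hUK hy, ball_subset_ball (by linarith) (hKsub hy).1⟩
  obtain ⟨g, hg1, hg0, hgc, hgIcc⟩ := exists_continuous_one_zero_of_isCompact hKc
    (isOpen_compl_iff.mp (by simpa using (hUo.inter isOpen_ball : IsOpen V)))
    (disjoint_compl_right.mono_left hKV)
  have hsupp : tsupport g ⊆ ball x r := by
    have hs1 : Function.support g ⊆ ball x (3 * r / 4) := by
      intro y hy
      by_contra hyV
      exact hy (hg0 (fun hV : y ∈ V => hyV hV.2))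
    exact (closure_mono hs1).trans ((closure_ball_subset_closedBall).trans
      (closedBall_subset_ball (by linarith)))
  have hEq := hint g g.continuous hsupp hgIcc
  have hgint_a : Integrable (fun y => g y) a := g.continuous.integrable_of_hasCompactSupport hgc
  have hgint_b : Integrable (fun y => g y) b := g.continuous.integrable_of_hasCompactSupport hgc
  have h1 : (a K).toReal ≤ ∫ y, g y ∂a := by
    have e1 : (a K).toReal = ∫ y in K, (1:ℝ) ∂a := by simp [setIntegral_const, measureReal_def]
    have e2 : ∫ y in K, (1:ℝ) ∂a = ∫ y in K, g y ∂a :=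
      setIntegral_congr_fun hKc.measurableSet (fun y hy => (hg1 hy).symm)
    rw [e1, e2]
    exact setIntegral_le_integral hgint_a
      (Filter.Eventually.of_forall fun y => (hgIcc y).1)
  have h2 : ∫ y, g y ∂b ≤ (b U).toReal := by
    have e1 : ∫ y, g y ∂b = ∫ y in V, g y ∂b :=
      (setIntegral_eq_integral_of_forall_compl_eq_zero (fun y hy => hg0 hy)).symm
    rw [e1]
    calc ∫ y in V, g y ∂b ≤ ∫ y in V, (1:ℝ) ∂b := by
          refine setIntegral_mono_ae_restrict (hgint_b.integrableOn) (integrableOn_const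
            (measure_lt_top _ _).ne) (Filter.Eventually.of_forall fun y => (hgIcc y).2)
      _ = (b V).toReal := by simp [setIntegral_const, measureReal_def]
      _ ≤ (b U).toReal := ENNReal.toReal_mono (measure_ne_top _ _)
          (measure_mono Set.inter_subset_left)
  have hKU : a K ≤ b U := by
    have := h1.trans (hEq.trans_le h2)
    exact (ENNReal.toReal_le_toReal (measure_ne_top _ _) (measure_ne_top _ _)).mp this
  calc a (B \ t) ≤ a K + (ε : ℝ≥0∞)/2 := hKlt.le
    _ ≤ b U + (ε : ℝ≥0∞)/2 := add_le_add_left hKU _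
    _ ≤ (ε : ℝ≥0∞)/2 + (ε : ℝ≥0∞)/2 := add_le_add_left hUlt.le _
    _ = 0 + (ε : ℝ≥0∞) := by rw [zero_add, ENNReal.add_halves]
lemma totalVariation_ball_eq_zero {n : ℕ} (μ : SignedMeasure (Euc n)) (x : Euc n) {r : ℝ}
    (hr : 0 < r)
    (h : ∀ g : Euc n → ℝ, Continuous g → tsupport g ⊆ ball x r →
      (∀ y, g y ∈ Set.Icc (0:ℝ) 1) → sInt μ g = 0) :
    μ.totalVariation (ball x (r/2)) = 0 := by
  have h' : ∀ g : Euc n → ℝ, Continuous g → tsupport g ⊆ ball x r →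
      (∀ y, g y ∈ Set.Icc (0:ℝ) 1) →
      ∫ y, g y ∂μ.toJordanDecomposition.posPart = ∫ y, g y ∂μ.toJordanDecomposition.negPart := by
    intro g hg hs hIcc
    have := h g hg hs hIcc
    rw [sInt] at this
    linarith [this]
  obtain ⟨s, hs, hps, hqs⟩ := μ.toJordanDecomposition.mutuallySingular
  have hp : μ.toJordanDecomposition.posPart (ball x (r/2)) = 0 :=
    helper_vanish _ _ x hr hs hps hqs h'
  have hq : μ.toJordanDecomposition.negPart (ball x (r/2)) = 0 :=
    helper_vanish _ _ x hr hs.compl hqs (by rwa [compl_compl])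
      (fun g hg hsup hIcc => (h' g hg hsup hIcc).symm)
  simp [SignedMeasure.totalVariation, Measure.add_apply, hp, hq]
lemma continuous_regAbs (k : ℕ) : Continuous (regAbs k) :=
  Real.continuous_sqrt.comp ((continuous_pow 2).add continuous_const)
lemma memTop_exists_ae_abs_le {n : ℕ} {ν : Measure (Euc n)} {f : Euc n → ℝ}
    (hf : MemLp f ⊤ ν) : ∃ C : ℝ, 0 ≤ C ∧ ∀ᵐ y ∂ν, |f y| ≤ C := by
  refine ⟨(eLpNormEssSup f ν).toReal, ENNReal.toReal_nonneg, ?_⟩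
  filter_upwards [ae_le_eLpNormEssSup (f := f) (μ := ν)] with y hy
  have hne : eLpNormEssSup f ν ≠ ⊤ := by
    have h := hf.2
    rw [eLpNorm_exponent_top] at h
    exact h.ne
  have := ENNReal.toReal_mono hne hy
  simpa [Real.norm_eq_abs] using this
lemma densRepr {n : ℕ} (ν : Measure (Euc n)) [IsFiniteMeasure ν] (X : Set (Euc n)) {k : ℕ}
    (hk : 2 ≤ k) {f : Euc n → ℝ} (hf : MemLp f ⊤ ν) :
    ∃ d : Euc n → ℝ, Measurable d ∧ Integrable d ν ∧ d =ᵐ[ν] concDensity k ν X f := by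
  obtain ⟨C, hC0, hC⟩ := memTop_exists_ae_abs_le hf
  set F := hf.1.mk f with hF
  have hFm : Measurable F := hf.1.stronglyMeasurable_mk.measurable
  have hFae : f =ᵐ[ν] F := hf.1.ae_eq_mk
  set N : ℝ := nLkNorm k ν X (fun y => regAbs k (f y)) ^ ((k : ℝ) - 1) with hN
  set d : Euc n → ℝ := fun x => (ν X).toReal⁻¹ * (regAbs k (F x) ^ ((k : ℝ) - 2) * F x / N)
    with hd
  have he2 : (0:ℝ) ≤ (k:ℝ) - 2 := by
    have : (2:ℝ) ≤ (k:ℝ) := by exact_mod_cast hk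
    linarith
  have hdm : Measurable d := by
    apply Measurable.const_mul
    apply Measurable.div_const
    exact ((Real.continuous_rpow_const he2).measurable.comp
      ((continuous_regAbs k).measurable.comp hFm)).mul hFm
  have hdb : ∀ᵐ y ∂ν, |d y| ≤ (ν X).toReal⁻¹ * ((C + 2) ^ ((k : ℝ) - 2) * C / |N|) := by
    filter_upwards [hC, hFae] with y hy hFy
    have hFyC : |F y| ≤ C := by rw [← hFy]; exact hy
    have h2 : regAbs k (F y) ^ ((k:ℝ) - 2) ≤ (C + 2) ^ ((k:ℝ) - 2) := by
      apply Real.rpow_le_rpow (regAbs_nonneg _ _) _ he2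
      calc regAbs k (F y) ≤ |F y| + 1 := regAbs_le k (F y)
        _ ≤ C + 2 := by linarith
    have h1 : |regAbs k (F y) ^ ((k:ℝ) - 2)| = regAbs k (F y) ^ ((k:ℝ) - 2) :=
      abs_of_nonneg (Real.rpow_nonneg (regAbs_nonneg _ _) _)
    have h3 : |regAbs k (F y) ^ ((k:ℝ) - 2) * F y| ≤ (C + 2) ^ ((k:ℝ) - 2) * C := by
      rw [abs_mul, h1]
      exact mul_le_mul h2 hFyC (abs_nonneg _) (Real.rpow_nonneg (by linarith) _)
    have h4 : |regAbs k (F y) ^ ((k:ℝ) - 2) * F y| / |N|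
        ≤ (C + 2) ^ ((k:ℝ) - 2) * C / |N| := by
      rcases (abs_nonneg N).eq_or_lt with h0 | h0
      · rw [← h0]; simp
      · exact (div_le_div_iff_of_pos_right h0).mpr h3
    have : |d y| = (ν X).toReal⁻¹ * (|regAbs k (F y) ^ ((k:ℝ) - 2) * F y| / |N|) := by
      rw [hd]
      simp only
      rw [abs_mul, abs_div, abs_of_nonneg (inv_nonneg.mpr ENNReal.toReal_nonneg)]
    rw [this]
    exact mul_le_mul_of_nonneg_left h4 (inv_nonneg.mpr ENNReal.toReal_nonneg)
  have hdi : Integrable d ν := by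
    refine (memLp_top_of_bound hdm.aestronglyMeasurable ((ν X).toReal⁻¹ * ((C + 2) ^ ((k : ℝ) - 2) * C / |N|)) ?_).integrable le_top
    simpa [Real.norm_eq_abs] using hdb
  refine ⟨d, hdm, hdi, ?_⟩
  filter_upwards [hFae] with y hy
  rw [hd]
  simp only [concDensity, ← hN, hy]
lemma tendsto_rpow_nat_inv {t : ℝ} (ht : 0 < t) :
    Tendsto (fun k : ℕ => t ^ ((k:ℝ)⁻¹)) atTop (𝓝 1) := by
  have h : (fun k : ℕ => t ^ ((k:ℝ)⁻¹)) = fun k : ℕ => Real.exp (Real.log t * (k:ℝ)⁻¹) := by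
    funext k; rw [Real.rpow_def_of_pos ht]
  rw [h]
  have h2 : Tendsto (fun k : ℕ => Real.log t * (k:ℝ)⁻¹) atTop (𝓝 0) := by
    simpa using tendsto_inv_atTop_nhds_zero_nat.const_mul (Real.log t)
  simpa [Function.comp_def] using (Real.continuous_exp.tendsto 0).comp h2
lemma nLkNorm_eventually_ge {n : ℕ} {X : Set (Euc n)} (hXm : MeasurableSet X)
    {ν : Measure (Euc n)} [IsFiniteMeasure ν] (hνX : ν Xᶜ = 0) (hν0 : 0 < ν X)
    {f : ℕ → Euc n → ℝ} (hf : ∀ k, MemLp (f k) ⊤ ν)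
    {finf : Euc n → ℝ} (hfinf : MemLp finf ⊤ ν)
    (hconv : TendstoUniformlyOn f finf atTop X)
    {η : ℝ} (hη : 0 < η) (hηM : η < nLinfNorm ν X finf) :
    ∀ᶠ k in atTop, nLinfNorm ν X finf - η ≤ nLkNorm k ν X (fun y => regAbs k (f k y)) := by
  have haeX : ∀ᵐ x ∂ν, x ∈ X := by
    rw [MeasureTheory.ae_iff]; exact hνX
  have hrX : ν.restrict X = ν := Measure.restrict_eq_self_of_ae_mem haeX
  set M := nLinfNorm ν X finf with hMdef
  have hMess : M = essSup (fun y => |finf y|) ν := by rw [hMdef, nLinfNorm, hrX]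
  set F := hfinf.1.mk finf with hFdef
  have hFm : Measurable F := hfinf.1.stronglyMeasurable_mk.measurable
  have hFae : finf =ᵐ[ν] F := hfinf.1.ae_eq_mk
  set η3 := η/3 with hη3
  have hη3pos : 0 < η3 := by rw [hη3]; linarith
  set S := {y | M - η3 < |F y|} with hSdef
  have hSm : MeasurableSet S := measurableSet_lt measurable_const hFm.abs
  have hνne : ν ≠ 0 := by
    intro h0
    rw [h0] at hν0
    simp at hν0
  have hS : ν S ≠ 0 := by
    intro h0
    have hnull : ν {x | finf x ≠ F x} = 0 := by
      have := hFae
      rwa [Filter.EventuallyEq, MeasureTheory.ae_iff] at this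
    have hsub : {x | M - η3 < |finf x|} ⊆ S ∪ {x | finf x ≠ F x} := by
      intro y hy
      by_cases hyF : finf y = F y
      · exact Or.inl (by rw [hSdef]; simpa [← hyF] using hy)
      · exact Or.inr hyF
    have hmem : ν {x | M - η3 < |finf x|} = 0 :=
      measure_mono_null hsub (measure_union_null h0 hnull)
    have hbdd : ∀ a ∈ {a : ℝ | ν {x | a < |finf x|} = 0}, (0:ℝ) ≤ a := by
      intro a ha
      by_contra hlt
      push_neg at hlt
      have : {x | a < |finf x|} = Set.univ := by
        ext x
        simp only [Set.mem_setOf_eq, Set.mem_univ, iff_true]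
        exact lt_of_lt_of_le hlt (abs_nonneg _)
      simp only [Set.mem_setOf_eq, this] at ha
      exact hνne (Measure.measure_univ_eq_zero.mp ha)
    have hsinf : M ≤ M - η3 := by
      refine le_trans (le_of_eq hMess) ?_
      rw [essSup_eq_sInf]
      exact csInf_le ⟨0, hbdd⟩ hmem
    linarith
  set c₀ := (ν (X ∩ S)).toReal with hc₀def
  have hXS : ν S ≤ ν (X ∩ S) := by
    calc ν S ≤ ν ((X ∩ S) ∪ Xᶜ) := measure_mono (fun y hy => by
          by_cases hyX : y ∈ X
          · exact Or.inl ⟨hyX, hy⟩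
          · exact Or.inr hyX)
      _ ≤ ν (X ∩ S) + ν Xᶜ := measure_union_le _ _
      _ = ν (X ∩ S) := by rw [hνX, add_zero]
  have hc₀ : 0 < c₀ :=
    ENNReal.toReal_pos (fun h => hS (le_antisymm (h ▸ hXS) zero_le)) (measure_ne_top _ _)
  set b := M - 2*η3 with hbdef
  have hb : 0 < b := by rw [hbdef, hη3]; linarith
  have hX0 : 0 < (ν X).toReal := ENNReal.toReal_pos hν0.ne' (measure_ne_top _ _)
  have E1 : ∀ᶠ k in atTop, ∀ y ∈ X, dist (finf y) (f k y) < η3 :=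
    (Metric.tendstoUniformlyOn_iff.mp hconv) η3 hη3pos
  have E3 : Tendsto (fun k : ℕ => ((ν X).toReal⁻¹ * c₀) ^ ((k:ℝ)⁻¹) * b) atTop (𝓝 b) := by
    simpa using
      (tendsto_rpow_nat_inv (t := (ν X).toReal⁻¹ * c₀) (mul_pos (inv_pos.mpr hX0) hc₀)).mul_const b
  have Egt : ∀ᶠ k : ℕ in atTop, M - η < ((ν X).toReal⁻¹ * c₀) ^ ((k:ℝ)⁻¹) * b :=
    E3.eventually_const_lt (by rw [hbdef, hη3]; linarith)
  filter_upwards [E1, Egt, eventually_ge_atTop 1] with k hk1 hk3 hk4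
  obtain ⟨Ck, hCk0, hCk⟩ := memTop_exists_ae_abs_le (hf k)
  set G := fun y => |regAbs k (f k y)| ^ (k:ℝ) with hGdef
  have hGaesm : AEStronglyMeasurable G ν := by
    have hcont : Continuous fun a : ℝ => |regAbs k a| ^ (k:ℝ) :=
      (Real.continuous_rpow_const (Nat.cast_nonneg k)).comp (continuous_regAbs k).abs
    exact hcont.comp_aestronglyMeasurable (hf k).1
  have hGbd : ∀ᵐ y ∂ν, ‖G y‖ ≤ (Ck + 2) ^ (k:ℝ) := by
    filter_upwards [hCk] with y hy
    rw [hGdef]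
    simp only [Real.norm_eq_abs]
    rw [abs_of_nonneg (Real.rpow_nonneg (abs_nonneg _) _)]
    apply Real.rpow_le_rpow (abs_nonneg _) _ (Nat.cast_nonneg k)
    rw [abs_of_nonneg (regAbs_nonneg _ _)]
    calc regAbs k (f k y) ≤ |f k y| + 1 := regAbs_le _ _
      _ ≤ Ck + 2 := by linarith
  have hGint : Integrable G ν := (memLp_top_of_bound hGaesm _ hGbd).integrable le_top
  have key : b ^ (k:ℝ) * c₀ ≤ ∫ y in X, G y ∂ν := by
    have step1 : b ^ (k:ℝ) * c₀ = ∫ _ in X ∩ S, b ^ (k:ℝ) ∂ν := by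
      rw [setIntegral_const, hc₀def, smul_eq_mul, mul_comm, measureReal_def]
    have hptwise : ∀ᵐ y ∂ν.restrict (X ∩ S), b ^ (k:ℝ) ≤ G y := by
      rw [ae_restrict_iff' (hXm.inter hSm)]
      filter_upwards [hFae] with y hy hyXS
      have h1 : M - η3 < |F y| := hyXS.2
      have h2 : dist (finf y) (f k y) < η3 := hk1 y hyXS.1
      have h3 : b ≤ |f k y| := by
        rw [← hy] at h1
        have habs := abs_sub_abs_le_abs_sub (finf y) (f k y)
        rw [Real.dist_eq] at h2
        rw [hbdef]
        linarith
      refine Real.rpow_le_rpow hb.le ?_ (Nat.cast_nonneg k)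
      exact h3.trans ((abs_le_regAbs _ _).trans (le_abs_self _))
    have step2 : ∫ _ in X ∩ S, b ^ (k:ℝ) ∂ν ≤ ∫ y in X ∩ S, G y ∂ν :=
      setIntegral_mono_ae_restrict (integrableOn_const (measure_lt_top _ _).ne)
        hGint.integrableOn hptwise
    have step3 : ∫ y in X ∩ S, G y ∂ν ≤ ∫ y in X, G y ∂ν :=
      setIntegral_mono_set hGint.integrableOn
        (Filter.Eventually.of_forall fun y => Real.rpow_nonneg (abs_nonneg _) _)
        (HasSubset.Subset.eventuallyLE Set.inter_subset_left)
    linarith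
  have hkne : ((k:ℝ)) ≠ 0 := Nat.cast_ne_zero.mpr (by omega)
  have hfinal : ((ν X).toReal⁻¹ * c₀) ^ ((k:ℝ)⁻¹) * b
      ≤ nLkNorm k ν X (fun y => regAbs k (f k y)) := by
    rw [nLkNorm]
    have h5 : ((ν X).toReal⁻¹ * c₀) * b ^ (k:ℝ) ≤ (ν X).toReal⁻¹ * ∫ y in X, G y ∂ν := by
      calc ((ν X).toReal⁻¹ * c₀) * b ^ (k:ℝ) = (ν X).toReal⁻¹ * (b ^ (k:ℝ) * c₀) := by ring
        _ ≤ _ := mul_le_mul_of_nonneg_left key (by positivity)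
    calc ((ν X).toReal⁻¹ * c₀) ^ ((k:ℝ)⁻¹) * b
        = (((ν X).toReal⁻¹ * c₀) * b ^ (k:ℝ)) ^ ((k:ℝ)⁻¹) := by
          rw [Real.mul_rpow (by positivity) (Real.rpow_nonneg hb.le _)]
          congr 1
          rw [← Real.rpow_mul hb.le, mul_inv_cancel₀ hkne, Real.rpow_one]
      _ ≤ _ := Real.rpow_le_rpow (by positivity) h5 (by positivity)
  linarith
lemma essSup_restrict_mono_abs {α : Type*} [MeasurableSpace α] (ν : Measure α)
    {s t : Set α} (hst : s ⊆ t) (h : α → ℝ)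
    (C : ℝ) (hC : ∀ᵐ y ∂ν, |h y| ≤ C) :
    essSup (fun y => |h y|) (ν.restrict s)
      ≤ max (essSup (fun y => |h y|) (ν.restrict t)) 0 := by
  rw [essSup_eq_sInf, essSup_eq_sInf]
  have hsub : {a : ℝ | (ν.restrict t) {x | a < |h x|} = 0}
      ⊆ {a : ℝ | (ν.restrict s) {x | a < |h x|} = 0} := fun a ha =>
    le_antisymm (le_trans (Measure.le_iff'.mp (Measure.restrict_mono hst le_rfl) _)
      (le_of_eq ha)) zero_le
  have hne : C ∈ {a : ℝ | (ν.restrict t) {x | a < |h x|} = 0} := by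
    have h1 : ∀ᵐ y ∂ν.restrict t, |h y| ≤ C := ae_restrict_of_ae hC
    rw [MeasureTheory.ae_iff] at h1
    simp only [Set.mem_setOf_eq, not_le] at h1 ⊢
    exact h1
  by_cases hbdd : BddBelow {a : ℝ | (ν.restrict s) {x | a < |h x|} = 0}
  · exact le_trans (csInf_le_csInf hbdd ⟨C, hne⟩ hsub) (le_max_left _ _)
  · rw [Real.sInf_of_not_bddBelow hbdd]
    exact le_max_right _ _
lemma nLkNorm_nonneg {n : ℕ} (k : ℕ) (ν : Measure (Euc n)) (X : Set (Euc n)) (g : Euc n → ℝ) :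
    0 ≤ nLkNorm k ν X g :=
  Real.rpow_nonneg (mul_nonneg (inv_nonneg.mpr ENNReal.toReal_nonneg)
    (integral_nonneg fun y => Real.rpow_nonneg (abs_nonneg _) _)) _

set_option maxHeartbeats 1000000 in

/-- **Support of the limit concentration measure.**
Let `X ⊆ ℝⁿ` be compact and `ν` a finite Borel measure, positive on nonempty relatively open
subsets of `X`. If `f_k → f_∞` uniformly on `X` with `‖f_∞‖_{L^∞(X,ν)} > 0`, and the
concentration measures `ν_{k_i}` converge weakly* to a finite signed measure `ν_∞` along a
subsequence, then `supp(ν_∞) ⊆ { x ∈ X : |f_∞|^★(x) = ‖f_∞‖_{L^∞(X,ν)} }`. -/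
theorem support_limit_concentration_measure
    {n : ℕ} (X : Set (Euc n)) (hXc : IsCompact X) (hXm : MeasurableSet X)
    (ν : Measure (Euc n)) [IsFiniteMeasure ν] (hνX : ν Xᶜ = 0) (hν0 : 0 < ν X)
    (hνpos : ∀ V : Set (Euc n), IsOpen V → (X ∩ V).Nonempty → 0 < ν (X ∩ V))
    (f : ℕ → Euc n → ℝ) (hf : ∀ k, MemLp (f k) ⊤ ν)
    (finf : Euc n → ℝ) (hfinf : MemLp finf ⊤ ν)
    (hM : 0 < nLinfNorm ν X finf)
    (hconv : TendstoUniformlyOn f finf atTop X)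
    (φ : ℕ → ℕ) (hφ : StrictMono φ)
    (νinf : SignedMeasure (Euc n))
    (hweak : ∀ g : Euc n → ℝ, Continuous g →
      Tendsto (fun i => sInt (ν.withDensityᵥ (concDensity (φ i) ν X (f (φ i)))) g)
        atTop (𝓝 (sInt νinf g))) :
    msupport (SignedMeasure.totalVariation νinf) ⊆
      {x ∈ X | essLimSup ν X (fun y => |finf y|) x = nLinfNorm ν X finf} := by
  intro x hx
  have haeX : ∀ᵐ y ∂ν, y ∈ X := by rw [MeasureTheory.ae_iff]; exact hνX
  set M := nLinfNorm ν X finf with hMdef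
  -- key reduction: if the tested integrals tend to 0 for all bumps in a ball around x, contradiction
  have main : ∀ r : ℝ, 0 < r →
      (∀ g : Euc n → ℝ, Continuous g → tsupport g ⊆ ball x r →
          (∀ y, g y ∈ Set.Icc (0:ℝ) 1) →
        Tendsto (fun i => sInt (ν.withDensityᵥ (concDensity (φ i) ν X (f (φ i)))) g)
          atTop (𝓝 0)) →
      False := by
    intro r hr hg0
    have hTV : νinf.totalVariation (ball x (r/2)) = 0 := by
      apply totalVariation_ball_eq_zero νinf x hr
      intro g hgc hgs hgI
      exact tendsto_nhds_unique (hweak g hgc) (hg0 g hgc hgs hgI)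
    have hpos := hx (ball x (r/2)) (ball_mem_nhds x (by linarith))
    rw [hTV] at hpos
    exact lt_irrefl _ hpos
  -- x ∈ X
  have hxX : x ∈ X := by
    by_contra hxX
    obtain ⟨r, hr, hball⟩ := Metric.isOpen_iff.mp hXc.isClosed.isOpen_compl x hxX
    refine main r hr ?_
    intro g hgc hgs hgI
    have hb1 : ∀ y, |g y| ≤ 1 := fun y => abs_le.mpr ⟨by linarith [(hgI y).1], (hgI y).2⟩
    have hev : ∀ᶠ i in atTop,
        sInt (ν.withDensityᵥ (concDensity (φ i) ν X (f (φ i)))) g = 0 := by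
      filter_upwards [hφ.tendsto_atTop.eventually (eventually_ge_atTop 2)] with i hi
      obtain ⟨d, hdm, hdi, hdae⟩ := densRepr ν X hi (hf (φ i))
      rw [← WithDensityᵥEq.congr_ae hdae, sInt_withDensityᵥ ν hdm hdi hgc 1 hb1]
      apply integral_eq_zero_of_ae
      filter_upwards [haeX] with y hy
      have hgy : g y = 0 := by
        apply image_eq_zero_of_notMem_tsupport
        intro hmem
        exact (hball (hgs hmem)) hy
      simp [hgy]
    exact Filter.Tendsto.congr'
      (by filter_upwards [hev] with i h using h.symm) tendsto_const_nhds
  -- essLimSup ≤ M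
  have hle : essLimSup ν X (fun y => |finf y|) x ≤ M := by
    rw [essLimSup]
    have hbdd : BddBelow (Set.range fun ε : Set.Ioi (0:ℝ) =>
        essSup (fun y => |finf y|) (ν.restrict (X ∩ ball x (ε:ℝ)))) := by
      refine ⟨0, ?_⟩
      rintro _ ⟨ε, rfl⟩
      exact essSup_abs_nonneg _ _
    obtain ⟨C, hC0, hC⟩ := memTop_exists_ae_abs_le hfinf
    refine (ciInf_le hbdd ⟨1, by norm_num⟩).trans ?_
    refine (essSup_restrict_mono_abs ν Set.inter_subset_left finf C hC).trans ?_
    have hunf : M = essSup (fun y => |finf y|) (ν.restrict X) := hMdef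
    rw [← hunf]
    exact max_le le_rfl hM.le
  simp only [Set.mem_setOf_eq]
  refine ⟨hxX, le_antisymm hle ?_⟩
  by_contra hlt
  push_neg at hlt
  rw [essLimSup] at hlt
  obtain ⟨⟨ε, hε⟩, hmlt⟩ := exists_lt_of_ciInf_lt hlt
  simp only at hmlt
  set m := essSup (fun y => |finf y|) (ν.restrict (X ∩ ball x ε)) with hm
  have hε0 : (0:ℝ) < ε := hε
  set m₀ := max m 0 with hm₀
  have hm₀0 : 0 ≤ m₀ := le_max_right m 0
  have hm₀M : m₀ < M := max_lt hmlt hM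
  set δ := M - m₀ with hδ
  have hδpos : 0 < δ := by rw [hδ]; linarith
  have hδM : δ ≤ M := by rw [hδ]; linarith
  have hMδ : 0 < M - δ/4 := by linarith
  set ρ := (m₀ + δ/4) / (M - δ/4) with hρ
  have hρ1 : ρ < 1 := by rw [hρ, div_lt_one hMδ]; linarith
  have hρ0 : 0 ≤ ρ := div_nonneg (by linarith) hMδ.le
  -- a.e. bound on |finf| on the ball
  obtain ⟨C, hC0, hC⟩ := memTop_exists_ae_abs_le hfinf
  have hfinfball : ∀ᵐ y ∂ν, y ∈ X ∩ ball x ε → |finf y| ≤ m₀ := by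
    have hbd : IsBoundedUnder (· ≤ ·) (ae (ν.restrict (X ∩ ball x ε)))
        (fun y => |finf y|) := ⟨C, by
      rw [Filter.eventually_map]
      filter_upwards [ae_restrict_of_ae hC] with y hy using hy⟩
    rw [← ae_restrict_iff' (hXm.inter measurableSet_ball)]
    filter_upwards [ae_le_essSup hbd] with y hy
    exact hy.trans (le_max_left m 0)
  -- eventual pointwise bound on the density
  have hbound : ∀ k : ℕ, 2 ≤ k → (∀ y ∈ X, dist (finf y) (f k y) < δ/8) → (k:ℝ)⁻¹ ≤ δ/8 →
      M - δ/4 ≤ nLkNorm k ν X (fun y => regAbs k (f k y)) →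
      ∀ᵐ y ∂ν, y ∈ ball x ε →
        |concDensity k ν X (f k) y| ≤ (ν X).toReal⁻¹ * ρ ^ ((k:ℝ) - 1) := by
    intro k hk2 hkconv hkinv hkN
    have hek1 : (0:ℝ) ≤ (k:ℝ) - 1 := by
      have : (2:ℝ) ≤ (k:ℝ) := by exact_mod_cast hk2
      linarith
    filter_upwards [haeX, hfinfball] with y hyX hyball hyb
    have hfb : |finf y| ≤ m₀ := hyball ⟨hyX, hyb⟩
    have hfk : |f k y| ≤ m₀ + δ/8 := by
      have hd := hkconv y hyX
      rw [Real.dist_eq] at hd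
      have habs := abs_sub_abs_le_abs_sub (f k y) (finf y)
      rw [abs_sub_comm] at habs
      linarith
    have hreg : regAbs k (f k y) ≤ m₀ + δ/4 := (regAbs_le_abs_add k _).trans (by linarith)
    have hrpos : 0 < regAbs k (f k y) := regAbs_pos (by omega) _
    have hnum : regAbs k (f k y) ^ ((k:ℝ)-2) * |f k y| ≤ (m₀ + δ/4) ^ ((k:ℝ)-1) := by
      calc regAbs k (f k y) ^ ((k:ℝ)-2) * |f k y|
          ≤ regAbs k (f k y) ^ ((k:ℝ)-2) * regAbs k (f k y) :=
            mul_le_mul_of_nonneg_left (abs_le_regAbs _ _)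
              (Real.rpow_nonneg hrpos.le _)
        _ = regAbs k (f k y) ^ ((k:ℝ)-1) := by
            nth_rewrite 2 [← Real.rpow_one (regAbs k (f k y))]
            rw [← Real.rpow_add hrpos]
            congr 1
            ring
        _ ≤ (m₀ + δ/4) ^ ((k:ℝ)-1) := Real.rpow_le_rpow hrpos.le hreg hek1
    have hden : (M - δ/4) ^ ((k:ℝ)-1)
        ≤ nLkNorm k ν X (fun y => regAbs k (f k y)) ^ ((k:ℝ)-1) :=
      Real.rpow_le_rpow hMδ.le hkN hek1
    have hdenpos : 0 < (M - δ/4) ^ ((k:ℝ)-1) := Real.rpow_pos_of_pos hMδ _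
    rw [concDensity]
    rw [abs_mul, abs_of_nonneg (inv_nonneg.mpr ENNReal.toReal_nonneg)]
    refine mul_le_mul_of_nonneg_left ?_ (inv_nonneg.mpr ENNReal.toReal_nonneg)
    rw [abs_div, abs_mul, abs_of_nonneg (Real.rpow_nonneg (regAbs_nonneg _ _) _),
      abs_of_nonneg (Real.rpow_nonneg (nLkNorm_nonneg _ _ _ _) _)]
    calc regAbs k (f k y) ^ ((k:ℝ)-2) * |f k y|
          / nLkNorm k ν X (fun y => regAbs k (f k y)) ^ ((k:ℝ)-1)
        ≤ (m₀ + δ/4) ^ ((k:ℝ)-1) / (M - δ/4) ^ ((k:ℝ)-1) :=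
          div_le_div₀ (Real.rpow_nonneg (by linarith) _) hnum hdenpos hden
      _ = ρ ^ ((k:ℝ)-1) := by
          rw [hρ, Real.div_rpow (by linarith) hMδ.le]
  refine main ε hε0 ?_
  intro g hgc hgs hgI
  have hb1 : ∀ y, |g y| ≤ 1 := fun y => abs_le.mpr ⟨by linarith [(hgI y).1], (hgI y).2⟩
  have EN : ∀ᶠ k in atTop, M - δ/4 ≤ nLkNorm k ν X (fun y => regAbs k (f k y)) :=
    nLkNorm_eventually_ge hXm hνX hν0 hf hfinf hconv (by linarith) (by linarith)
  have E1 : ∀ᶠ k in atTop, ∀ y ∈ X, dist (finf y) (f k y) < δ/8 :=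
    Metric.tendstoUniformlyOn_iff.mp hconv _ (by linarith)
  have E2 : ∀ᶠ k : ℕ in atTop, (k:ℝ)⁻¹ ≤ δ/8 :=
    (tendsto_inv_atTop_nhds_zero_nat.eventually_le_const (by linarith))
  have hsq : ∀ᶠ i in atTop,
      ‖sInt (ν.withDensityᵥ (concDensity (φ i) ν X (f (φ i)))) g‖
        ≤ (ν X).toReal⁻¹ * ρ ^ (φ i - 1) * (ν (ball x ε)).toReal := by
    filter_upwards [hφ.tendsto_atTop.eventually (eventually_ge_atTop 2),
      hφ.tendsto_atTop.eventually E1, hφ.tendsto_atTop.eventually E2,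
      hφ.tendsto_atTop.eventually EN] with i h2 hconvk hinvk hNk
    obtain ⟨d, hdm, hdi, hdae⟩ := densRepr ν X h2 (hf (φ i))
    rw [← WithDensityᵥEq.congr_ae hdae, sInt_withDensityᵥ ν hdm hdi hgc 1 hb1]
    rw [← setIntegral_eq_integral_of_forall_compl_eq_zero (s := ball x ε) (fun y hy => by
      have hgy : g y = 0 := image_eq_zero_of_notMem_tsupport (fun hmem => hy (hgs hmem))
      simp [hgy])]
    have hrw : ρ ^ (φ i - 1) = ρ ^ ((φ i : ℝ) - 1) := by
      rw [← Real.rpow_natCast ρ (φ i - 1)]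
      congr 1
      push_cast [Nat.cast_sub (by omega : 1 ≤ φ i)]
      ring
    rw [hrw]
    refine norm_setIntegral_le_of_norm_le_const_ae (measure_lt_top ν _) ?_
    have hbd := hbound (φ i) h2 hconvk hinvk hNk
    rw [← ae_restrict_iff' measurableSet_ball] at hbd
    filter_upwards [hbd, ae_restrict_of_ae hdae] with y h1 h2'
    rw [Real.norm_eq_abs, abs_mul, h2']
    calc |g y| * |concDensity (φ i) ν X (f (φ i)) y|
        ≤ 1 * ((ν X).toReal⁻¹ * ρ ^ ((φ i:ℝ) - 1)) :=
          mul_le_mul (hb1 y) h1 (abs_nonneg _) one_pos.le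
      _ = (ν X).toReal⁻¹ * ρ ^ ((φ i:ℝ) - 1) := one_mul _
  refine squeeze_zero_norm' hsq ?_
  have hpow : Tendsto (fun i => ρ ^ (φ i - 1)) atTop (𝓝 0) :=
    (tendsto_pow_atTop_nhds_zero_of_lt_one hρ0 hρ1).comp
      ((tendsto_sub_atTop_nat 1).comp hφ.tendsto_atTop)
  have := (hpow.const_mul (ν X).toReal⁻¹).mul_const (ν (ball x ε)).toReal
  simpa using this
end
end
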